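/- Monotone iteration with shifted operator: suppose C > 0 satisfies C ≥ 1 + sup_Σ(λe^{-v}) · sup_ℝ F', where λ > 0, v is smooth, and F is smooth and bounded with bounded derivative. If smooth functions f_{n-1} ≥ f_n satisfy (Δ + C)f_{n+1} = -(λ/2)e^{-v}F(2f_n + u) + C f_n + c and (Δ + C)f_n = -(λ/2)e^{-v}F(2f_{n-1} + u) + C f_{n-1} + c for a smooth u and constant c, then f_n ≥ f_{n+1}. -/

import Mathlib

/-!
The right-hand side `t ↦ C t - (λ/2) e^{-v} F(2t + u)` of the iteration is nondecreasing in `t`,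
because its slope is at least `C - λ e^{-v} sup F' ≥ 1`. Hence `f₂ ≤ f₁` makes the right-hand side
of the equation for `f₃` at most that for `f₂`, and the maximum principle for `Δ + C`, applied to
`f₃ - f₂`, gives `f₃ ≤ f₂`. That `C > 0` uses `sup F' ≥ 0`, which holds because `F` is bounded.
-/

theorem nonneg_of_bounded_of_deriv_le {F : ℝ → ℝ} (hF : Differentiable ℝ F) {M : ℝ}
    (hbdd : ∃ B, ∀ t, |F t| ≤ B) (hM : ∀ t, deriv F t ≤ M) : 0 ≤ M := by
  by_contra! hneg
  obtain ⟨B, hB⟩ := hbdd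
  have hB0 : 0 ≤ B := (abs_nonneg _).trans (hB 0)
  set t : ℝ := (2 * B + 1) / -M
  have ht : 0 ≤ t := div_nonneg (by linarith) (by linarith)
  have hMt : M * t = -(2 * B + 1) := by
    simp only [t]
    field_simp [hneg.ne]
  have hdrop := image_sub_le_mul_sub_of_deriv_le hF hM ht
  have hFt := abs_le.mp (hB t)
  have hF0 := abs_le.mp (hB 0)
  linarith

theorem monotone_mul_sub_mul_of_deriv_le {F : ℝ → ℝ} (hF : Differentiable ℝ F) {M k C : ℝ}
    (hM : ∀ t, deriv F t ≤ M) (hk : 0 ≤ k) (hkC : k * M ≤ C) :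
    Monotone fun t => C * t - k * F t := by
  intro s t hst
  have hslope : k * (F t - F s) ≤ C * (t - s) :=
    calc k * (F t - F s) ≤ k * (M * (t - s)) :=
          mul_le_mul_of_nonneg_left (image_sub_le_mul_sub_of_deriv_le hF hM hst) hk
      _ = (k * M) * (t - s) := by ring
      _ ≤ C * (t - s) := mul_le_mul_of_nonneg_right hkC (sub_nonneg.mpr hst)
  show C * s - k * F s ≤ C * t - k * F t
  linarith

theorem le_of_shifted_le {X : Type*} {Δ : (X → ℝ) → (X → ℝ)} {C : ℝ}
    (hΔlin : ∀ w₁ w₂ : X → ℝ, Δ (fun x => w₁ x - w₂ x) = fun x => Δ w₁ x - Δ w₂ x)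
    (hmp : ∀ w : X → ℝ, (∀ x, Δ w x + C * w x ≤ 0) → ∀ x, w x ≤ 0) {w₁ w₂ : X → ℝ}
    (h : ∀ x, Δ w₁ x + C * w₁ x ≤ Δ w₂ x + C * w₂ x) : ∀ x, w₁ x ≤ w₂ x := by
  have hdiff := hmp (fun x => w₁ x - w₂ x) fun x => by
    rw [hΔlin]
    linarith [h x]
  exact fun x => sub_nonpos.mp (hdiff x)

theorem stmt_14_general {X : Type*}
    (Δ : (X → ℝ) → (X → ℝ))
    (hΔlin : ∀ w₁ w₂ : X → ℝ, Δ (fun x => w₁ x - w₂ x) = fun x => Δ w₁ x - Δ w₂ x)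
    (hmp : ∀ w : X → ℝ, ∀ C : ℝ, 0 < C → (∀ x, Δ w x + C * w x ≤ 0) → ∀ x, w x ≤ 0)
    (lam : ℝ) (hlam : 0 < lam) (v u : X → ℝ)
    (F : ℝ → ℝ) (hF : Differentiable ℝ F)
    (MF Mev C c : ℝ) (hFbdd : ∃ B, ∀ t, |F t| ≤ B)
    (hMF : ∀ t, deriv F t ≤ MF)
    (hMev : ∀ x, Real.exp (-(v x)) ≤ Mev) (hMev0 : 0 ≤ Mev)
    (hC : 1 + lam * Mev * MF ≤ C)
    (f1 f2 f3 : X → ℝ)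
    (hmono : ∀ x, f2 x ≤ f1 x)
    (heq2 : ∀ x, Δ f2 x + C * f2 x
      = -(lam/2) * Real.exp (-(v x)) * F (2 * f1 x + u x) + C * f1 x + c)
    (heq3 : ∀ x, Δ f3 x + C * f3 x
      = -(lam/2) * Real.exp (-(v x)) * F (2 * f2 x + u x) + C * f2 x + c) :
    ∀ x, f3 x ≤ f2 x := by
  have hMF0 : 0 ≤ MF := nonneg_of_bounded_of_deriv_le hF hFbdd hMF
  have hCpos : 0 < C := by nlinarith [mul_nonneg (mul_nonneg hlam.le hMev0) hMF0]
  refine le_of_shifted_le hΔlin (fun w => hmp w C hCpos) fun x => ?_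
  have hk : 0 ≤ lam * Real.exp (-(v x)) := by positivity
  have hkC : lam * Real.exp (-(v x)) * MF ≤ C := by
    have := mul_le_mul_of_nonneg_right (mul_le_mul_of_nonneg_left (hMev x) hlam.le) hMF0
    linarith
  have hrhs := monotone_mul_sub_mul_of_deriv_le hF hMF hk hkC
    (show 2 * f2 x + u x ≤ 2 * f1 x + u x by linarith [hmono x])
  dsimp only at hrhs
  rw [heq2, heq3]
  linarith

/-- Monotone iteration with the shifted operator `Δ + C` on a compact surface: if
`C ≥ 1 + sup(λ e^{-v})·sup F'` and consecutive iterates satisfy the iteration scheme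
with `f_{n-1} ≥ f_n`, then `f_n ≥ f_{n+1}`.  Here `Δ` is abstracted as a linear operator
satisfying the maximum principle for `Δ + C` with `C > 0`. -/
theorem stmt_14 {X : Type*} [TopologicalSpace X] [CompactSpace X] [Nonempty X]
    (Δ : (X → ℝ) → (X → ℝ))
    (hΔlin : ∀ w₁ w₂ : X → ℝ, Δ (fun x => w₁ x - w₂ x) = fun x => Δ w₁ x - Δ w₂ x)
    (hmp : ∀ w : X → ℝ, ∀ C : ℝ, 0 < C → (∀ x, Δ w x + C * w x ≤ 0) → ∀ x, w x ≤ 0)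
    (lam : ℝ) (hlam : 0 < lam) (v u : X → ℝ) (hv : Continuous v) (hu : Continuous u)
    (F : ℝ → ℝ) (hF : Differentiable ℝ F)
    (MF Mev C c : ℝ) (hFbdd : ∃ B, ∀ t, |F t| ≤ B)
    (hMF : ∀ t, deriv F t ≤ MF)
    (hMev : ∀ x, Real.exp (-(v x)) ≤ Mev) (hMev0 : 0 ≤ Mev)
    (hC : 1 + lam * Mev * MF ≤ C)
    (f1 f2 f3 : X → ℝ)
    (hmono : ∀ x, f2 x ≤ f1 x)
    (heq2 : ∀ x, Δ f2 x + C * f2 x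
      = -(lam/2) * Real.exp (-(v x)) * F (2 * f1 x + u x) + C * f1 x + c)
    (heq3 : ∀ x, Δ f3 x + C * f3 x
      = -(lam/2) * Real.exp (-(v x)) * F (2 * f2 x + u x) + C * f2 x + c) :
    ∀ x, f3 x ≤ f2 x :=
  stmt_14_general Δ hΔlin hmp lam hlam v u F hF MF Mev C c hFbdd hMF hMev hMev0 hC f1 f2 f3 hmono
    heq2 heq3
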